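/- arXiv:1807.11065 — 5 statements merged into one kernel-verified Lean document; each statement's English description precedes it below -/
import Mathlib

section
/- Let q be a prime power and F_q the finite field with q elements. If X ⊆ F_q is a finite set with |X| > q^{1/2}, then R(X) = F_q. -/
/-! `r ∈ R(X)` as soon as the map `(a, b) ↦ a - r b` on `X × X` is not injective. Since
`|X × X| = |X|² > q`, pigeonhole gives `(a, b) ≠ (c, d)` with `a - r b = c - r d`; then `b ≠ d`
and `r = (a - c) / (b - d)`. -/

open scoped Pointwise

/-- The quotient set `R(X) = {(x₁ - x₂)/(x₃ - x₄) : x₁, x₂, x₃, x₄ ∈ X, x₃ ≠ x₄}`. -/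
def quotSet {F : Type*} [Field F] (X : Set F) : Set F :=
  {r | ∃ x₁ ∈ X, ∃ x₂ ∈ X, ∃ x₃ ∈ X, ∃ x₄ ∈ X, x₃ ≠ x₄ ∧ r = (x₁ - x₂) / (x₃ - x₄)}

theorem mem_quotSet_of_sub_mul_eq {F : Type*} [Field F] {X : Set F} {r a b c d : F}
    (ha : a ∈ X) (hb : b ∈ X) (hc : c ∈ X) (hd : d ∈ X) (hbd : b ≠ d)
    (h : a - r * b = c - r * d) : r ∈ quotSet X :=
  ⟨a, ha, c, hc, b, hb, d, hd, hbd,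
    (eq_div_iff (sub_ne_zero.mpr hbd)).mpr (by linear_combination -h)⟩

theorem mem_quotSet_of_card_lt_sq {F : Type*} [Field F] [Finite F] {X : Set F}
    (hX : Nat.card F < X.ncard ^ 2) (r : F) : r ∈ quotSet X := by
  have hcard : Nat.card F < Nat.card (X × X) := by
    rwa [Nat.card_prod, Nat.card_coe_set_eq, ← sq]
  have hf : ¬ (fun p : X × X => (p.1 : F) - r * p.2).Injective := fun hf =>
    (Nat.card_le_card_of_injective _ hf).not_gt hcard
  obtain ⟨⟨a, b⟩, ⟨c, d⟩, heq, hne⟩ := Function.not_injective_iff.mp hf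
  have hbd : (b : F) ≠ d := by
    intro hbd
    exact hne (Prod.ext (Subtype.ext (by simpa [hbd] using heq)) (Subtype.ext hbd))
  exact mem_quotSet_of_sub_mul_eq a.2 b.2 c.2 d.2 hbd heq

/-- **Lemma 2.2.** If `X ⊆ F_q` with `|X| > q^{1/2}`, then `R(X) = F_q`. -/
theorem quotSet_eq_univ_of_large
    (q : ℕ) (F : Type) [Field F] [Fintype F] (hq : Fintype.card F = q)
    (X : Set F) (hX : (q : ℝ) ^ ((1 : ℝ) / 2) < (X.ncard : ℝ)) :
    quotSet X = Set.univ := by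
  rw [← Real.sqrt_eq_rpow] at hX
  have hq_lt : (q : ℝ) < (X.ncard : ℝ) ^ 2 :=
    (Real.sqrt_lt' ((Real.sqrt_nonneg _).trans_lt hX)).mp hX
  refine Set.eq_univ_of_forall (mem_quotSet_of_card_lt_sq ?_)
  rw [Nat.card_eq_fintype_card, hq]
  exact_mod_cast hq_lt
end

section
/- Let q be a prime power and F_q the finite field with q elements. Let X ⊆ F_q be a finite set with at least two elements such that 1 + R(X) ⊆ R(X) and X·R(X) ⊆ R(X), where 1 + R(X) = {1 + r : r ∈ R(X)} and X·R(X) = {x·r : x ∈ X, r ∈ R(X)}. Then R(X) is the smallest subfield of F_q containing X. -/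
/-!
Let `R = R(X)`. In a finite set, `x • R ⊆ R` forces `x • R = R` for `x ≠ 0`, and likewise
`t +ᵥ R ⊆ R` forces `t +ᵥ R = R`. Hence the additive stabilizer `A` of `R` is an additive group
containing `1` and contained in `R` (as `0 ∈ R`), and `A` is stable under multiplication by `X`.
The ring of multipliers `{t | t • A ⊆ A}` is a subring of a finite field, hence a subfield; it
contains `X` and lies in `A`. Thus `closure X ⊆ A ⊆ R ⊆ closure X`.
-/

open scoped Pointwise

section QuotSet

variable {F : Type*} [Field F]

theorem quotSet_subset_closure (X : Set F) : quotSet X ⊆ (Subfield.closure X : Set F) := by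
  rintro _ ⟨x₁, h₁, x₂, h₂, x₃, h₃, x₄, h₄, -, rfl⟩
  have hX := @Subfield.subset_closure F _ X
  exact div_mem (sub_mem (hX h₁) (hX h₂)) (sub_mem (hX h₃) (hX h₄))

theorem zero_mem_quotSet {X : Set F} (hX : X.Nontrivial) : (0 : F) ∈ quotSet X := by
  obtain ⟨a, ha, b, hb, hab⟩ := hX
  exact ⟨a, ha, a, ha, a, ha, b, hb, hab, by simp⟩

end QuotSet

theorem Subring.inv_mem_of_fintype {F : Type*} [Field F] [Fintype F] (S : Subring F) {x : F}
    (hx : x ∈ S) : x⁻¹ ∈ S := by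
  rcases eq_or_ne x 0 with rfl | hx0
  · simp
  have hq := Fintype.one_lt_card (α := F)
  have hinv : x⁻¹ = x ^ (Fintype.card F - 2) := by
    refine (eq_inv_of_mul_eq_one_left ?_).symm
    rw [← pow_succ, show Fintype.card F - 2 + 1 = Fintype.card F - 1 by omega,
      FiniteField.pow_card_sub_one_eq_one x hx0]
  exact hinv ▸ pow_mem hx _

namespace AddSubgroup

variable {R : Type*} [Ring R]

def multiplierRing (A : AddSubgroup R) : Subring R where
  carrier := {t | ∀ a ∈ A, t * a ∈ A}
  one_mem' a ha := by rwa [one_mul]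
  zero_mem' a _ := by rw [zero_mul]; exact A.zero_mem
  mul_mem' hs ht a ha := by rw [mul_assoc]; exact hs _ (ht a ha)
  add_mem' hs ht a ha := by rw [add_mul]; exact A.add_mem (hs a ha) (ht a ha)
  neg_mem' hs a ha := by rw [neg_mul]; exact A.neg_mem (hs a ha)

theorem coe_multiplierRing_subset {A : AddSubgroup R} (hA : (1 : R) ∈ A) :
    (A.multiplierRing : Set R) ⊆ A := fun t ht => by simpa using ht 1 hA

end AddSubgroup

section Stabilizer

variable {F : Type*} [DivisionRing F] {s : Set F}

theorem Set.Finite.smul_set_eq_of_smul_set_subset₀ (hs : s.Finite) {x : F} (hx0 : x ≠ 0)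
    (hx : x • s ⊆ s) : x • s = s :=
  (MulAction.mem_stabilizer_set_iff_smul_set_subset (a := Units.mk0 x hx0) hs).2 hx

theorem mul_mem_addStabilizer (hs : s.Finite) {x t : F} (hx : x • s ⊆ s)
    (ht : t ∈ AddAction.stabilizer F s) : x * t ∈ AddAction.stabilizer F s := by
  rcases eq_or_ne x 0 with rfl | hx0
  · rw [zero_mul]; exact zero_mem _
  have hxs := hs.smul_set_eq_of_smul_set_subset₀ hx0 hx
  rw [AddAction.mem_stabilizer_iff] at ht ⊢
  calc x * t +ᵥ s = x * t +ᵥ x • s := by rw [hxs]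
    _ = x • (t +ᵥ s) := by
      simp only [← Set.image_smul, ← Set.image_vadd, Set.image_image, vadd_eq_add, smul_eq_mul,
        mul_add]
    _ = s := by rw [ht, hxs]

end Stabilizer

theorem quotSet_eq_closure_general
    (F : Type) [Field F] [Fintype F]
    (X : Set F) (hX : 2 ≤ X.ncard)
    (h1 : {(1 : F)} + quotSet X ⊆ quotSet X)
    (h2 : X * quotSet X ⊆ quotSet X) :
    quotSet X = (Subfield.closure X : Set F) := by
  set R := quotSet X
  let A := AddAction.stabilizer F R
  have one_mem_A : (1 : F) ∈ A := by
    rwa [AddAction.mem_stabilizer_set_iff_vadd_set_subset R.toFinite, ← Set.singleton_vadd]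
  have A_subset_R : (A : Set F) ⊆ R := fun t ht => by
    have hX' : X.Nontrivial := Set.one_lt_ncard_iff_nontrivial.1 hX
    simpa using (AddAction.mem_stabilizer_set' R.toFinite).1 ht (zero_mem_quotSet hX')
  let K := A.multiplierRing.toSubfield fun _ => A.multiplierRing.inv_mem_of_fintype
  have closure_le_K : Subfield.closure X ≤ K := Subfield.closure_le.2 fun x hx t ht =>
    mul_mem_addStabilizer R.toFinite ((Set.smul_set_subset_mul hx).trans h2) ht
  refine (quotSet_subset_closure X).antisymm fun r hr => A_subset_R ?_
  exact AddSubgroup.coe_multiplierRing_subset one_mem_A (closure_le_K hr)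

/-- **Lemma 2.3.** If `1 + R(X) ⊆ R(X)` and `X · R(X) ⊆ R(X)`, then `R(X)` is the subfield of
`F_q` generated by `X`. -/
theorem quotSet_eq_closure
    (q : ℕ) (F : Type) [Field F] [Fintype F] (hq : Fintype.card F = q)
    (X : Set F) (hX : 2 ≤ X.ncard)
    (h1 : {(1 : F)} + quotSet X ⊆ quotSet X)
    (h2 : X * quotSet X ⊆ quotSet X) :
    quotSet X = (Subfield.closure X : Set F) :=
  quotSet_eq_closure_general F X hX h1 h2
end

section
/- Let q be a prime power and F_q the finite field with q elements. For all constants K > 0 and δ > 0 there exists a constant c > 0 with the following property: if X ⊆ F_q is a finite set with at least two elements satisfying |R(X)| ≥ K·|X|², then there exists r ∈ R(X) such that for every subset X' ⊆ X with |X'| ≥ δ·|X| one has |X' + r·X'| ≥ c·|X|², where X' + r·X' = {a + r·b : a, b ∈ X'}. -/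
open scoped Pointwise

/-!
Call a quadruple `(a₁, a₂, c₁, c₂) ∈ A⁴` with `a₁ ≠ a₂` an `r`-collision if
`a₁ + r c₁ = a₂ + r c₂`. A collision determines `r = (a₁ - a₂) / (c₂ - c₁)`, so the collision
counts of all `r` sum to at most `|A|⁴`, and some nonzero `r ∈ R(A)` has at most
`|A|⁴ / (|R(A)| - 1)` collisions. For that `r` the energy `E(A, rA)` is at most
`|A|² + |A|⁴ / (|R(A)| - 1) = O(|A|²)`, and by Cauchy–Schwarz every `B ⊆ A` satisfies
`|B|⁴ ≤ |B + rB| E(B, rB) ≤ |B + rB| E(A, rA)`.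
-/

open Finset
open scoped Combinatorics.Additive

section Collisions

variable {F : Type*} [DivisionRing F] [DecidableEq F]

def collisions (r : F) (A : Finset F) : Finset ((F × F) × F × F) :=
  {x ∈ (A ×ˢ A) ×ˢ A ×ˢ A | x.1.1 ≠ x.1.2 ∧ x.1.1 + r * x.2.1 = x.1.2 + r * x.2.2}

lemma addEnergy_smul_le_card_sq_add_card_collisions {r : F} (hr : r ≠ 0) (A : Finset F) :
    E[A, r • A] ≤ #A ^ 2 + #(collisions r A) := by
  let diagonal := {x ∈ (A ×ˢ A) ×ˢ (r • A) ×ˢ (r • A) | x.1.1 = x.1.2 ∧ x.2.1 = x.2.2}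
  let scale : (F × F) × F × F → (F × F) × F × F := fun x => (x.1, r * x.2.1, r * x.2.2)
  have h_split : {x ∈ (A ×ˢ A) ×ˢ (r • A) ×ˢ (r • A) | x.1.1 + x.2.1 = x.1.2 + x.2.2} ⊆
      diagonal ∪ (collisions r A).image scale := by
    rintro ⟨⟨a₁, a₂⟩, b₁, b₂⟩ hx
    simp only [mem_filter, mem_product, mem_smul_finset, smul_eq_mul] at hx
    obtain ⟨⟨⟨ha₁, ha₂⟩, ⟨c₁, hc₁, rfl⟩, ⟨c₂, hc₂, rfl⟩⟩, heq⟩ := hx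
    by_cases ha : a₁ = a₂
    · subst ha
      refine mem_union_left _ (mem_filter.2 ⟨?_, rfl, add_left_cancel heq⟩)
      exact mem_product.2 ⟨mem_product.2 ⟨ha₁, ha₁⟩,
        mem_product.2 ⟨smul_mem_smul_finset hc₁, smul_mem_smul_finset hc₂⟩⟩
    · refine mem_union_right _ (mem_image.2 ⟨((a₁, a₂), c₁, c₂), ?_, rfl⟩)
      simp [collisions, ha₁, ha₂, hc₁, hc₂, ha, heq]
  have h_diagonal : #diagonal ≤ #A ^ 2 := by
    calc #diagonal ≤ #(A ×ˢ (r • A)) := by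
          refine card_le_card_of_injOn (fun x => (x.1.1, x.2.1)) ?_ ?_
          · intro x hx
            simp only [diagonal, mem_coe, mem_filter, mem_product] at hx
            exact mem_coe.2 (mem_product.2 ⟨hx.1.1.1, hx.1.2.1⟩)
          · rintro ⟨⟨a₁, a₂⟩, b₁, b₂⟩ hx ⟨⟨a₁', a₂'⟩, b₁', b₂'⟩ hy hxy
            simp only [diagonal, mem_coe, mem_filter] at hx hy
            simp only [Prod.mk.injEq] at hxy ⊢
            grind
      _ = #A ^ 2 := by rw [card_product, card_smul_finset₀ hr, sq]
  calc E[A, r • A] ≤ #(diagonal ∪ (collisions r A).image scale) := card_le_card h_split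
    _ ≤ #diagonal + #((collisions r A).image scale) := card_union_le _ _
    _ ≤ #A ^ 2 + #(collisions r A) := add_le_add h_diagonal card_image_le

lemma eq_of_mem_collisions {r s : F} {A : Finset F} {x : (F × F) × F × F}
    (hr : x ∈ collisions r A) (hs : x ∈ collisions s A) : r = s := by
  obtain ⟨⟨a₁, a₂⟩, c₁, c₂⟩ := x
  simp only [collisions, mem_filter] at hr hs
  have hc : c₁ - c₂ ≠ 0 := by
    refine sub_ne_zero.2 fun hc => hr.2.1 ?_
    subst hc
    exact add_right_cancel hr.2.2
  have h_slope : ∀ {t : F}, a₁ + t * c₁ = a₂ + t * c₂ → t * (c₁ - c₂) = a₂ - a₁ := fun h => by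
    rw [mul_sub, sub_eq_sub_iff_add_eq_add, add_comm]
    exact h
  exact mul_right_cancel₀ hc ((h_slope hr.2.2).trans (h_slope hs.2.2).symm)

lemma sum_card_collisions_le (S A : Finset F) :
    ∑ r ∈ S, #(collisions r A) ≤ #A ^ 4 := by
  have h_disjoint : (S : Set F).PairwiseDisjoint (collisions · A) :=
    fun r _ s _ hrs => disjoint_left.2 fun _ hr hs => hrs (eq_of_mem_collisions hr hs)
  calc ∑ r ∈ S, #(collisions r A) = #(S.biUnion (collisions · A)) :=
        (card_biUnion h_disjoint).symm
    _ ≤ #((A ×ˢ A) ×ˢ A ×ˢ A) :=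
        card_le_card (biUnion_subset.2 fun _ _ => filter_subset _ _)
    _ = #A ^ 4 := by simp only [card_product]; ring

lemma exists_card_mul_card_collisions_le {S : Finset F} (hS : S.Nonempty) (A : Finset F) :
    ∃ r ∈ S, #S * #(collisions r A) ≤ #A ^ 4 :=
  exists_le_of_sum_le hS <| by
    rw [← mul_sum, sum_const, smul_eq_mul]
    exact Nat.mul_le_mul_left _ (sum_card_collisions_le S A)

lemma exists_pivot {S : Finset F} (hS : S.Nonempty) (hS₀ : 0 ∉ S) (A : Finset F) :
    ∃ r ∈ S, ∀ B ⊆ A, #B ^ 4 * #S ≤ #(B + r • B) * (#A ^ 2 * #S + #A ^ 4) := by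
  obtain ⟨r, hrS, hr⟩ := exists_card_mul_card_collisions_le hS A
  have hr₀ : r ≠ 0 := ne_of_mem_of_not_mem hrS hS₀
  refine ⟨r, hrS, fun B hB => ?_⟩
  have h_cauchy_schwarz : #B ^ 4 ≤ #(B + r • B) * E[A, r • A] := by
    calc #B ^ 4 = #B ^ 2 * #(r • B) ^ 2 := by rw [card_smul_finset₀ hr₀]; ring
      _ ≤ #(B + r • B) * E[B, r • B] := le_card_add_mul_addEnergy B (r • B)
      _ ≤ #(B + r • B) * E[A, r • A] := by
        gcongr
  calc #B ^ 4 * #S ≤ #(B + r • B) * E[A, r • A] * #S := by gcongr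
    _ ≤ #(B + r • B) * ((#A ^ 2 + #(collisions r A)) * #S) := by
        rw [mul_assoc]
        gcongr
        exact addEnergy_smul_le_card_sq_add_card_collisions hr₀ A
    _ ≤ #(B + r • B) * (#A ^ 2 * #S + #A ^ 4) := by
        gcongr
        rw [add_mul, mul_comm #(collisions r A)]
        gcongr

end Collisions

lemma one_mem_quotSet {F : Type*} [Field F] {X : Set F} (hX : X.Nontrivial) :
    (1 : F) ∈ quotSet X := by
  obtain ⟨x, hx, y, hy, hxy⟩ := hX
  exact ⟨x, hx, y, hy, x, hx, y, hy, hxy, (div_self (sub_ne_zero.2 hxy)).symm⟩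

/-- The bound of `exists_pivot` read with `t = |S|`, `n = |A|`, `m = |B|`, `P = |B + rB|`. -/
lemma le_of_pow_four_mul_le {K δ n m t P : ℝ} (hK : 0 < K) (hδ : 0 < δ) (hn : 0 < n)
    (ht : K * n ^ 2 ≤ 2 * t) (hm : δ * n ≤ m) (hP : m ^ 4 * t ≤ P * (n ^ 2 * t + n ^ 4)) :
    δ ^ 4 * K / (K + 2) * n ^ 2 ≤ P := by
  have ht₀ : 0 ≤ t := by nlinarith [sq_nonneg n]
  have h_sum : 0 < t + n ^ 2 := by positivity
  have h_main : δ ^ 4 * n ^ 2 * t ≤ P * (t + n ^ 2) := by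
    have h_pow : (δ * n) ^ 4 ≤ m ^ 4 := pow_le_pow_left₀ (by positivity) hm 4
    have : n ^ 2 * (δ ^ 4 * n ^ 2 * t) ≤ n ^ 2 * (P * (t + n ^ 2)) := by
      nlinarith [mul_le_mul_of_nonneg_right h_pow ht₀]
    exact le_of_mul_le_mul_left this (by positivity)
  rw [div_mul_eq_mul_div, div_le_iff₀ (by positivity)]
  refine le_of_mul_le_mul_right ?_ h_sum
  calc δ ^ 4 * K * n ^ 2 * (t + n ^ 2) ≤ δ ^ 4 * n ^ 2 * t * (K + 2) := by
        nlinarith [mul_le_mul_of_nonneg_left ht (by positivity : 0 ≤ δ ^ 4 * n ^ 2)]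
    _ ≤ P * (t + n ^ 2) * (K + 2) := by gcongr
    _ = P * (K + 2) * (t + n ^ 2) := by ring

/-- **Lemma 2.4 (pivoting).** For all `K, δ > 0` there is `c > 0` such that: if `X ⊆ F_q` has
at least two elements and `|R(X)| ≥ K|X|²`, then there exists `r ∈ R(X)` such that for every
`X' ⊆ X` with `|X'| ≥ δ|X|` one has `|X' + rX'| ≥ c|X|²`. -/
theorem pivoting :
    ∀ K δ : ℝ, 0 < K → 0 < δ → ∃ c : ℝ, 0 < c ∧
      ∀ (q : ℕ) (F : Type) [Field F] [Fintype F],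
        Fintype.card F = q →
        ∀ X : Set F, 2 ≤ X.ncard →
          K * (X.ncard : ℝ) ^ 2 ≤ ((quotSet X).ncard : ℝ) →
          ∃ r ∈ quotSet X, ∀ X' ⊆ X, δ * (X.ncard : ℝ) ≤ (X'.ncard : ℝ) →
            c * (X.ncard : ℝ) ^ 2 ≤ ((X' + r • X').ncard : ℝ) := by
  intro K δ hK hδ
  refine ⟨δ ^ 4 * K / (K + 2), by positivity, fun q F _ _ _ X hX hR => ?_⟩
  classical
  lift X to Finset F using X.toFinite
  obtain ⟨Q, hQ⟩ := (quotSet (X : Set F)).toFinite.exists_finset_coe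
  rw [Set.ncard_coe_finset] at hX hR ⊢
  rw [← hQ, Set.ncard_coe_finset] at hR
  have h_one : (1 : F) ∈ Q := by
    rw [← mem_coe, hQ]
    exact one_mem_quotSet (Set.one_lt_ncard_iff_nontrivial.1 (by rw [Set.ncard_coe_finset]; omega))
  have hS : (Q.erase 0).Nonempty := ⟨1, mem_erase.2 ⟨one_ne_zero, h_one⟩⟩
  obtain ⟨r, hrS, hr⟩ := exists_pivot hS (notMem_erase 0 Q) X
  refine ⟨r, hQ ▸ mem_of_mem_erase hrS, fun X' hX' hX'card => ?_⟩
  lift X' to Finset F using X'.toFinite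
  rw [← coe_smul_finset, ← coe_add, Set.ncard_coe_finset]
  rw [Set.ncard_coe_finset] at hX'card
  have hQS : #Q ≤ 2 * #(Q.erase 0) := by
    have := pred_card_le_card_erase (s := Q) (a := 0)
    have := hS.card_pos
    omega
  refine le_of_pow_four_mul_le (t := #(Q.erase 0)) hK hδ (by exact_mod_cast (by omega : 0 < #X))
    (hR.trans (by exact_mod_cast hQS)) hX'card ?_
  exact_mod_cast hr X' (coe_subset.1 hX')
end

section
/- Let q be a prime power and F_q the finite field with q elements. Let X₁, X₂ ⊆ F_q be nonempty finite sets. Then there exists an element ξ ∈ F_q with ξ ≠ 0 such that |X₁ + ξ·X₂| ≥ |X₁|·|X₂|·(q − 1) / (|X₁|·|X₂| + (q − 1)), where X₁ + ξ·X₂ = {a + ξ·b : a ∈ X₁, b ∈ X₂}. -/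
/-!
For `ξ ≠ 0`, Cauchy–Schwarz gives `|A|²|B|² ≤ |A + ξB| · E(A, ξB)`, and the additive energy
`E(A, ξB)` counts the pairs `(a₁, b₁), (a₂, b₂)` of `A × B` with `a₁ + ξ b₁ = a₂ + ξ b₂`.
Summed over the `q - 1` values of `ξ`, a diagonal pair is counted every time and any other pair
at most once, so with `N = |A||B|` the total is at most `N(q - 1) + N²`. An `ξ` of minimal energy
thus has `(q - 1) E ≤ N(q - 1) + N²`, which with Cauchy–Schwarz yields the bound.
-/

open scoped Pointwise
open Finset

lemma mul_div_add_le_of_sq_le_mul {N m S E : ℝ} (hN : 0 ≤ N) (hm : 0 ≤ m) (hS : 0 ≤ S)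
    (hSE : N ^ 2 ≤ S * E) (hE : m * E ≤ N * m + N ^ 2) : N * m / (N + m) ≤ S := by
  rcases hN.eq_or_lt with rfl | hN
  · simpa using hS
  rw [div_le_iff₀ (by positivity)]
  refine le_of_mul_le_mul_left ?_ hN
  calc N * (N * m) = N ^ 2 * m := by ring
    _ ≤ S * (m * E) := by nlinarith [mul_le_mul_of_nonneg_right hSE hm]
    _ ≤ S * (N * m + N ^ 2) := mul_le_mul_of_nonneg_left hE hS
    _ = N * (S * (N + m)) := by ring

section Domain

variable {R : Type*} [CommRing R] [IsDomain R] [DecidableEq R]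

lemma card_filter_add_mul_eq_le_one {u v : R × R} (huv : u ≠ v) (s : Finset R) :
    #{ξ ∈ s | u.1 + ξ * u.2 = v.1 + ξ * v.2} ≤ 1 := by
  refine card_le_one.2 fun ξ hξ η hη => ?_
  simp only [mem_filter] at hξ hη
  have hprod : (ξ - η) * (u.2 - v.2) = 0 := by linear_combination hξ.2 - hη.2
  rcases mul_eq_zero.1 hprod with h | h
  · exact sub_eq_zero.1 h
  · have h2 : u.2 = v.2 := sub_eq_zero.1 h
    exact absurd (Prod.ext (by rw [h2] at hξ; exact add_right_cancel hξ.2) h2) huv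

lemma sum_card_filter_add_mul_eq_le (s : Finset R) (P : Finset (R × R)) :
    ∑ ξ ∈ s, #{p ∈ P ×ˢ P | p.1.1 + ξ * p.1.2 = p.2.1 + ξ * p.2.2} ≤ #P * #s + #P * #P := by
  simp_rw [card_filter]
  rw [sum_comm, ← diag_union_offDiag, sum_union (disjoint_diag_offDiag P)]
  simp_rw [← card_filter]
  gcongr
  · calc _ ≤ ∑ _p ∈ P.diag, #s := sum_le_sum fun _ _ => card_filter_le _ _
      _ = #P * #s := by rw [sum_const, diag_card, smul_eq_mul]
  · calc _ ≤ ∑ _p ∈ P.offDiag, 1 :=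
          sum_le_sum fun p hp => card_filter_add_mul_eq_le_one (mem_offDiag.1 hp).2.2 s
      _ ≤ #P * #P := by
        rw [sum_const, smul_eq_mul, mul_one, offDiag_card]
        exact Nat.sub_le _ _

end Domain

section Field

variable {F : Type*} [Field F] [DecidableEq F]

lemma addEnergy_smul_finset_eq (A B : Finset F) {ξ : F} (hξ : ξ ≠ 0) :
    addEnergy A (ξ • B) =
      #{p ∈ (A ×ˢ B) ×ˢ (A ×ˢ B) | p.1.1 + ξ * p.1.2 = p.2.1 + ξ * p.2.2} := by
  symm
  refine card_nbij' (fun p => ((p.1.1, p.2.1), (ξ * p.1.2, ξ * p.2.2)))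
    (fun x => ((x.1.1, ξ⁻¹ * x.2.1), (x.1.2, ξ⁻¹ * x.2.2))) ?_ ?_ ?_ ?_
  · rintro ⟨⟨a₁, b₁⟩, a₂, b₂⟩ h
    simp_all [mem_smul_finset]
  · rintro ⟨⟨a₁, a₂⟩, b₁, b₂⟩ h
    simp only [coe_filter, mem_product, mem_smul_finset, smul_eq_mul] at h
    obtain ⟨⟨⟨ha₁, ha₂⟩, ⟨c₁, hc₁, rfl⟩, ⟨c₂, hc₂, rfl⟩⟩, heq⟩ := h
    simpa [hξ, ha₁, ha₂, hc₁, hc₂] using heq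
  · rintro ⟨⟨a₁, b₁⟩, a₂, b₂⟩ -
    simp [hξ]
  · rintro ⟨⟨a₁, a₂⟩, b₁, b₂⟩ -
    simp [hξ]

lemma exists_card_mul_addEnergy_smul_finset_le [Fintype F] (A B : Finset F) :
    ∃ ξ ≠ (0 : F), (Fintype.card F - 1) * addEnergy A (ξ • B) ≤
      #A * #B * (Fintype.card F - 1) + (#A * #B) ^ 2 := by
  set s := univ.erase (0 : F)
  have hs : #s = Fintype.card F - 1 := by simp [s, card_erase_of_mem]
  obtain ⟨ξ, hξs, hmin⟩ := s.exists_min_image (fun ξ => addEnergy A (ξ • B)) ⟨1, by simp [s]⟩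
  refine ⟨ξ, (mem_erase.1 hξs).1, ?_⟩
  rw [← hs]
  calc #s * addEnergy A (ξ • B) ≤ ∑ η ∈ s, addEnergy A (η • B) := card_nsmul_le_sum _ _ _ hmin
    _ = ∑ η ∈ s, #{p ∈ (A ×ˢ B) ×ˢ (A ×ˢ B) | p.1.1 + η * p.1.2 = p.2.1 + η * p.2.2} :=
      sum_congr rfl fun η hη => addEnergy_smul_finset_eq A B (mem_erase.1 hη).1
    _ ≤ _ := by
      simpa [card_product, sq, mul_comm] using sum_card_filter_add_mul_eq_le s (A ×ˢ B)

theorem exists_div_le_card_add_smul_finset [Fintype F] (A B : Finset F) :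
    ∃ ξ ≠ (0 : F), #A * #B * (Fintype.card F - 1 : ℝ) / (#A * #B + (Fintype.card F - 1 : ℝ))
      ≤ #(A + ξ • B) := by
  obtain ⟨ξ, hξ, hE⟩ := exists_card_mul_addEnergy_smul_finset_le A B
  have hSE := le_card_add_mul_addEnergy A (ξ • B)
  rw [card_smul_finset₀ hξ, ← mul_pow] at hSE
  have hq : ((Fintype.card F - 1 : ℕ) : ℝ) = Fintype.card F - 1 :=
    Nat.cast_pred Fintype.card_pos
  refine ⟨ξ, hξ, mul_div_add_le_of_sq_le_mul (E := addEnergy A (ξ • B)) (by positivity)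
    (hq ▸ Nat.cast_nonneg _) (by positivity) (by exact_mod_cast hSE) ?_⟩
  rw [← hq]
  exact_mod_cast hE

end Field

theorem exists_dilate_large_sumset_general
    (q : ℕ) (F : Type) [Field F] [Fintype F] (hq : Fintype.card F = q)
    (X₁ X₂ : Set F) :
    ∃ ξ : F, ξ ≠ 0 ∧
      (X₁.ncard : ℝ) * (X₂.ncard : ℝ) * ((q : ℝ) - 1) /
          ((X₁.ncard : ℝ) * (X₂.ncard : ℝ) + ((q : ℝ) - 1)) ≤
        ((X₁ + ξ • X₂).ncard : ℝ) := by
  classical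
  subst hq
  simp only [Set.ncard_eq_toFinset_card', Set.toFinset_add, Set.toFinset_smul_set]
  exact exists_div_le_card_add_smul_finset _ _

/-- **Lemma 2.5 (Bourgain–Glibichuk pivot).** For nonempty `X₁, X₂ ⊆ F_q`, there exists
`ξ ≠ 0` such that `|X₁ + ξX₂| ≥ |X₁||X₂|(q-1)/(|X₁||X₂| + (q-1))`. -/
theorem exists_dilate_large_sumset
    (q : ℕ) (F : Type) [Field F] [Fintype F] (hq : Fintype.card F = q)
    (X₁ X₂ : Set F) (h₁ : X₁.Nonempty) (h₂ : X₂.Nonempty) :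
    ∃ ξ : F, ξ ≠ 0 ∧
      (X₁.ncard : ℝ) * (X₂.ncard : ℝ) * ((q : ℝ) - 1) /
          ((X₁.ncard : ℝ) * (X₂.ncard : ℝ) + ((q : ℝ) - 1)) ≤
        ((X₁ + ξ • X₂).ncard : ℝ) :=
  exists_dilate_large_sumset_general q F hq X₁ X₂
end

section
/- Let q be a prime power and F_q the finite field with q elements. For every constant K ≥ 1 there exists a constant c > 0 (depending only on K) with the following property: let X, Y ⊆ F_q be nonempty finite sets with 0 ∉ X, let D ⊆ F_q be a nonempty set of slopes with |D| = L, let N ≥ 1 be an integer, and let P ⊆ X × Y be a nonempty set of points such that every (x, y) ∈ P satisfies y = ξ·x for some ξ ∈ D, and such that for every ξ ∈ D the set P_ξ = {x ∈ X : (x, ξ·x) ∈ P} satisfies N ≤ |P_ξ| ≤ K·N. Then there exist x₀ ∈ X and y₀ ∈ Y such that, writing Y_{x₀} = {y ∈ Y : (x₀, y) ∈ P} and X_{y₀} = {x ∈ X : (x, y₀) ∈ P}, one has |Y_{x₀}| ≥ c·L·N/|X| and |X_{y₀}| ≥ c·L·N/|Y|, and there exists a subset Ỹ ⊆ Y_{x₀}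 with |Ỹ| ≥ c·L²·N²/(|X|²·|Y|) such that for every z ∈ Ỹ one has |P_{z/x₀} ∩ X_{y₀}| ≥ c·L²·N³/(|X|²·|Y|²). -/
/-!
Keep only the points of `P` that lie in a popular row and a popular column (at least `|D|N/(4|X|)`,
resp. `|D|N/(4|Y|)` points of `P`) and on a line through the origin keeping at least `N/4` of its
points; each of the three prunings loses at most `|D|N/4` of the at least `|D|N` points. On what
remains, `Q`, count the paths `(x, z) → (x', (z/x)x') → (x', y)` that run first along a line and
then along a column of `Q`. As every line of `Q` is long, Cauchy–Schwarz on the row sizes gives at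
least `(N/4)|Q|²/|X|` paths, so some pair `(x₀, y₀)` is joined by at least a `1/(|X||Y|)` share of
them; `x₀` and `y₀` are popular because `Q` is. Sorting these paths by their first step `z`, the
`z` carrying at least half the average number of paths form `Ytilde`: there are many of them since
no line holds more than `KN` points, and each gives a large `P_{z/x₀} ∩ X_{y₀}`.

`row P Y x`, `col P X y` and `line P X ξ` are the paper's `Y_x`, `X_y` and `P_ξ`.
-/

namespace PopularLines

open Finset

section Incidence

variable {α β : Type*} [DecidableEq α] [DecidableEq β]

def row (P : Finset (α × β)) (Y : Finset β) (x : α) : Finset β := {y ∈ Y | (x, y) ∈ P}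

def col (P : Finset (α × β)) (X : Finset α) (y : β) : Finset α := {x ∈ X | (x, y) ∈ P}

variable {P Q : Finset (α × β)} {X : Finset α} {Y : Finset β}

@[simp] lemma mem_row {x : α} {y : β} : y ∈ row P Y x ↔ y ∈ Y ∧ (x, y) ∈ P := mem_filter

@[simp] lemma mem_col {x : α} {y : β} : x ∈ col P X y ↔ x ∈ X ∧ (x, y) ∈ P := mem_filter

lemma row_mono (h : Q ⊆ P) (x : α) : row Q Y x ⊆ row P Y x :=
  fun _ hy => mem_row.2 ⟨(mem_row.1 hy).1, h (mem_row.1 hy).2⟩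

lemma col_mono (h : Q ⊆ P) (y : β) : col Q X y ⊆ col P X y :=
  fun _ hx => mem_col.2 ⟨(mem_col.1 hx).1, h (mem_col.1 hx).2⟩

lemma sum_eq_sum_sum_row {M : Type*} [AddCommMonoid M] (hP : P ⊆ X ×ˢ Y) (g : α × β → M) :
    ∑ p ∈ P, g p = ∑ x ∈ X, ∑ y ∈ row P Y x, g (x, y) :=
  sum_finset_product P X (row P Y) fun _ =>
    ⟨fun hp => ⟨(mem_product.1 (hP hp)).1, mem_row.2 ⟨(mem_product.1 (hP hp)).2, hp⟩⟩,
      fun h => (mem_row.1 h.2).2⟩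

lemma card_eq_sum_card_row (hP : P ⊆ X ×ˢ Y) : #P = ∑ x ∈ X, #(row P Y x) := by
  simp only [card_eq_sum_ones]
  exact sum_eq_sum_sum_row hP _

lemma card_fiber_fst_le_card_row (hP : P ⊆ X ×ˢ Y) (x : α) : #{p ∈ P | p.1 = x} ≤ #(row P Y x) :=
  card_le_card_of_injOn Prod.snd
    (fun p hp => by
      obtain ⟨hpP, rfl⟩ := mem_filter.1 (mem_coe.1 hp)
      exact mem_row.2 ⟨(mem_product.1 (hP hpP)).2, hpP⟩)
    (fun p hp p' hp' h => Prod.ext ((mem_filter.1 hp).2.trans (mem_filter.1 hp').2.symm) h)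

lemma card_fiber_snd_le_card_col (hP : P ⊆ X ×ˢ Y) (y : β) : #{p ∈ P | p.2 = y} ≤ #(col P X y) :=
  card_le_card_of_injOn Prod.fst
    (fun p hp => by
      obtain ⟨hpP, rfl⟩ := mem_filter.1 (mem_coe.1 hp)
      exact mem_col.2 ⟨(mem_product.1 (hP hpP)).1, hpP⟩)
    (fun p hp p' hp' h => Prod.ext h ((mem_filter.1 hp).2.trans (mem_filter.1 hp').2.symm))

lemma sum_card_inter_col {A : Finset α} (hA : A ⊆ X) :
    ∑ y ∈ Y, #(A ∩ col P X y) = ∑ x ∈ A, #(row P Y x) := by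
  have hinter : ∀ y, A ∩ col P X y = A.bipartiteBelow (fun x y => (x, y) ∈ P) y := fun y => by
    ext x
    simp only [mem_inter, mem_col, bipartiteBelow, mem_filter]
    exact ⟨fun h => ⟨h.1, h.2.2⟩, fun h => ⟨h.1, hA h.1, h.2⟩⟩
  simp only [hinter]
  exact (sum_card_bipartiteAbove_eq_sum_card_bipartiteBelow _).symm

lemma coe_row (x : α) : (row P Y x : Set β) = {y ∈ (Y : Set β) | (x, y) ∈ (P : Set (α × β))} :=
  coe_filter _ _

lemma coe_col (y : β) : (col P X y : Set α) = {x ∈ (X : Set α) | (x, y) ∈ (P : Set (α × β))} :=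
  coe_filter _ _

end Incidence

section Counting

variable {ι κ : Type*}

lemma natCast_mul_div_le {m : ℝ} (hm : 0 ≤ m) (k : ℕ) : (k : ℝ) * (m / k) ≤ m := by
  rcases k.eq_zero_or_pos with rfl | hk
  · simpa using hm
  rw [mul_div_cancel₀ _ (by positivity)]

lemma card_le_card_filter_le_add [DecidableEq κ] {P : Finset ι} {s : Finset κ} {f : ι → κ}
    (hf : ∀ p ∈ P, f p ∈ s) (w : κ → ℕ) (hw : ∀ k, #{p ∈ P | f p = k} ≤ w k) {t : ℝ}
    (ht : 0 ≤ t) : (#P : ℝ) ≤ #{p ∈ P | t ≤ w (f p)} + #s * t := by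
  have hsparse : (#{p ∈ P | ¬t ≤ w (f p)} : ℝ) ≤ #s * t := by
    rw [card_eq_sum_card_fiberwise fun p hp => hf p (mem_filter.1 hp).1, Nat.cast_sum]
    refine (sum_le_card_nsmul s _ t fun k _ => ?_).trans (nsmul_eq_mul _ _).le
    by_cases hk : t ≤ w k
    · rw [filter_filter, filter_false_of_mem fun p _ h => h.1 (h.2 ▸ hk)]
      simpa using ht
    · calc _ ≤ (#{p ∈ P | f p = k} : ℝ) := by
            gcongr
            exact filter_subset _ _
        _ ≤ w k := by exact_mod_cast hw k
        _ ≤ t := (not_le.1 hk).le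
  have hsplit := card_filter_add_card_filter_not (s := P) fun p => t ≤ w (f p)
  rw [← hsplit, Nat.cast_add]
  linarith

lemma exists_subset_sum_div_le (s : Finset ι) (a : ι → ℕ) {M : ℝ}
    (hM : ∀ i ∈ s, (a i : ℝ) ≤ M) :
    ∃ G ⊆ s, (∑ i ∈ s, a i : ℝ) / (2 * M) ≤ #G ∧
      ∀ i ∈ G, (∑ j ∈ s, a j : ℝ) / (2 * #s) ≤ a i := by
  set S : ℝ := ∑ i ∈ s, (a i : ℝ)
  refine ⟨{i ∈ s | S ≤ 2 * #s * a i}, filter_subset _ _, ?_, fun i hi =>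
    div_le_of_le_mul₀ (by positivity) (Nat.cast_nonneg _) (by linarith [(mem_filter.1 hi).2])⟩
  rcases s.eq_empty_or_nonempty with rfl | hs
  · simp [S]
  have hM0 : 0 ≤ M := by
    obtain ⟨i, hi⟩ := hs
    exact (Nat.cast_nonneg _).trans (hM i hi)
  have hs : (0 : ℝ) < #s := by exact_mod_cast hs.card_pos
  have hsparse : ∑ i ∈ s with ¬S ≤ 2 * #s * a i, (a i : ℝ) ≤ S / 2 :=
    calc ∑ i ∈ s with ¬S ≤ 2 * #s * a i, (a i : ℝ)
        ≤ ∑ _i ∈ s, S / (2 * #s) := by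
          refine sum_le_sum_of_subset_of_nonneg (filter_subset _ _) (fun _ _ _ => by positivity)
            |>.trans' (sum_le_sum fun i hi => ?_)
          rw [le_div_iff₀ (by positivity)]
          linarith [not_le.1 (mem_filter.1 hi).2]
      _ = S / 2 := by rw [sum_const, nsmul_eq_mul]; field_simp
  have hdense : ∑ i ∈ s with S ≤ 2 * #s * a i, (a i : ℝ) ≤ #{i ∈ s | S ≤ 2 * #s * a i} * M :=
    (sum_le_card_nsmul _ _ M fun i hi => hM i (mem_filter.1 hi).1).trans (nsmul_eq_mul _ _).le
  have hsplit := sum_filter_add_sum_filter_not s (fun i => S ≤ 2 * #s * a i) fun i => (a i : ℝ)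
  exact div_le_of_le_mul₀ (by positivity) (Nat.cast_nonneg _) (by linarith)

end Counting

section Lines

variable {F : Type*} [Field F] [DecidableEq F]

def line (P : Finset (F × F)) (X : Finset F) (ξ : F) : Finset F := {x ∈ X | (x, ξ * x) ∈ P}

variable {P Q : Finset (F × F)} {X Y D : Finset F}

@[simp] lemma mem_line {ξ x : F} : x ∈ line P X ξ ↔ x ∈ X ∧ (x, ξ * x) ∈ P := mem_filter

lemma line_subset (ξ : F) : line P X ξ ⊆ X := filter_subset _ _

lemma line_mono (h : Q ⊆ P) (ξ : F) : line Q X ξ ⊆ line P X ξ :=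
  fun _ hx => mem_line.2 ⟨(mem_line.1 hx).1, h (mem_line.1 hx).2⟩

lemma sum_fiber_slope_eq_sum_line {M : Type*} [AddCommMonoid M] (hX0 : (0 : F) ∉ X)
    (hPX : ∀ p ∈ P, p.1 ∈ X) (ξ : F) (g : F × F → M) :
    ∑ p ∈ P with p.2 / p.1 = ξ, g p = ∑ x ∈ line P X ξ, g (x, ξ * x) := by
  have hne : ∀ x ∈ X, x ≠ 0 := fun x hx h => hX0 (h ▸ hx)
  have hfiber : ∀ p ∈ ({p ∈ P | p.2 / p.1 = ξ} : Finset (F × F)), (p.1, ξ * p.1) = p :=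
    fun p hp => by
    obtain ⟨hp, hξ⟩ := mem_filter.1 hp
    exact Prod.ext rfl ((div_eq_iff (hne _ (hPX p hp))).1 hξ).symm
  refine sum_nbij' Prod.fst (fun x => (x, ξ * x)) (fun p hp => ?_) (fun x hx => ?_)
    (fun p hp => hfiber p hp) (fun x _ => rfl) (fun p hp => by rw [hfiber p hp])
  · have hpP := (mem_filter.1 hp).1
    exact mem_line.2 ⟨hPX p hpP, by rwa [hfiber p hp]⟩
  · obtain ⟨hxX, hxP⟩ := mem_line.1 hx
    exact mem_filter.2 ⟨hxP, mul_div_cancel_right₀ ξ (hne x hxX)⟩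

lemma card_fiber_slope_eq_card_line (hX0 : (0 : F) ∉ X) (hPX : ∀ p ∈ P, p.1 ∈ X) (ξ : F) :
    #{p ∈ P | p.2 / p.1 = ξ} = #(line P X ξ) := by
  simp only [card_eq_sum_ones]
  exact sum_fiber_slope_eq_sum_line hX0 hPX ξ _

lemma sum_eq_sum_sum_line {M : Type*} [AddCommMonoid M] (hX0 : (0 : F) ∉ X)
    (hPX : ∀ p ∈ P, p.1 ∈ X) (hPD : ∀ p ∈ P, p.2 / p.1 ∈ D) (g : F × F → M) :
    ∑ p ∈ P, g p = ∑ ξ ∈ D, ∑ x ∈ line P X ξ, g (x, ξ * x) := by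
  rw [← sum_fiberwise_of_maps_to hPD]
  exact sum_congr rfl fun ξ _ => sum_fiber_slope_eq_sum_line hX0 hPX ξ g

lemma card_eq_sum_card_line (hX0 : (0 : F) ∉ X) (hPX : ∀ p ∈ P, p.1 ∈ X)
    (hPD : ∀ p ∈ P, p.2 / p.1 ∈ D) : #P = ∑ ξ ∈ D, #(line P X ξ) := by
  simp only [card_eq_sum_ones]
  exact sum_eq_sum_sum_line hX0 hPX hPD _

lemma sum_sum_line_eq_sum_card_line_mul (hX0 : (0 : F) ∉ X) (hPX : ∀ p ∈ P, p.1 ∈ X)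
    (r : F → ℕ) :
    ∑ p ∈ P, ∑ x ∈ line P X (p.2 / p.1), r x = ∑ p ∈ P, #(line P X (p.2 / p.1)) * r p.1 := by
  have hPD : ∀ p ∈ P, p.2 / p.1 ∈ P.image fun p => p.2 / p.1 := fun p hp => mem_image_of_mem _ hp
  rw [sum_eq_sum_sum_line hX0 hPX hPD, sum_eq_sum_sum_line hX0 hPX hPD]
  refine sum_congr rfl fun ξ _ => ?_
  have hslope : ∀ x ∈ line P X ξ, ξ * x / x = ξ := fun x hx =>
    mul_div_cancel_right₀ ξ fun h => hX0 (h ▸ line_subset ξ hx)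
  calc ∑ x ∈ line P X ξ, ∑ x' ∈ line P X (ξ * x / x), r x'
      = ∑ x ∈ line P X ξ, ∑ x' ∈ line P X ξ, r x' := sum_congr rfl fun x hx => by rw [hslope x hx]
    _ = ∑ x ∈ line P X ξ, #(line P X ξ) * r x := by simp only [sum_const, smul_eq_mul, mul_sum]
    _ = ∑ x ∈ line P X ξ, #(line P X (ξ * x / x)) * r x :=
        sum_congr rfl fun x hx => by rw [hslope x hx]

def pathCount (Q : Finset (F × F)) (X Y : Finset F) (x y : F) : ℕ :=
  ∑ z ∈ row Q Y x, #(line Q X (z / x) ∩ col Q X y)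

lemma sum_sum_pathCount (hX0 : (0 : F) ∉ X) (hQ : Q ⊆ X ×ˢ Y) :
    ∑ x ∈ X, ∑ y ∈ Y, pathCount Q X Y x y =
      ∑ p ∈ Q, #(line Q X (p.2 / p.1)) * #(row Q Y p.1) := by
  rw [← sum_sum_line_eq_sum_card_line_mul hX0 (fun p hp => (mem_product.1 (hQ hp)).1)
    fun x => #(row Q Y x), sum_eq_sum_sum_row hQ]
  refine sum_congr rfl fun x _ => ?_
  simp only [pathCount]
  rw [sum_comm]
  exact sum_congr rfl fun z _ => sum_card_inter_col (line_subset _)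

lemma mul_card_sq_le_sum_sum_pathCount (hX0 : (0 : F) ∉ X) (hQ : Q ⊆ X ×ˢ Y) {m : ℝ}
    (hm0 : 0 ≤ m) (hm : ∀ p ∈ Q, m ≤ #(line Q X (p.2 / p.1))) :
    m * #Q ^ 2 ≤ #X * ∑ x ∈ X, ∑ y ∈ Y, (pathCount Q X Y x y : ℝ) := by
  have hrows : (#Q : ℝ) = ∑ x ∈ X, (#(row Q Y x) : ℝ) := by
    exact_mod_cast card_eq_sum_card_row hQ
  have hsq : ∑ p ∈ Q, (#(row Q Y p.1) : ℝ) = ∑ x ∈ X, (#(row Q Y x) : ℝ) ^ 2 := by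
    rw [sum_eq_sum_sum_row hQ]
    simp only [sum_const, nsmul_eq_mul, sq]
  have hpaths : ∑ x ∈ X, ∑ y ∈ Y, (pathCount Q X Y x y : ℝ) =
      ∑ p ∈ Q, (#(line Q X (p.2 / p.1)) : ℝ) * #(row Q Y p.1) := by
    exact_mod_cast sum_sum_pathCount hX0 hQ
  calc m * #Q ^ 2 ≤ m * (#X * ∑ x ∈ X, (#(row Q Y x) : ℝ) ^ 2) := by
        rw [hrows]
        gcongr
        exact sq_sum_le_card_mul_sum_sq
    _ = #X * ∑ p ∈ Q, m * #(row Q Y p.1) := by rw [← mul_sum, hsq]; ring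
    _ ≤ #X * ∑ x ∈ X, ∑ y ∈ Y, (pathCount Q X Y x y : ℝ) := by
        rw [hpaths]
        gcongr with p hp
        exact hm p hp

lemma exists_popular_subset (hX0 : (0 : F) ∉ X) (hP : P ⊆ X ×ˢ Y)
    (hPD : ∀ p ∈ P, p.2 / p.1 ∈ D) {m : ℝ} (hm : 0 ≤ m) (hmP : m ≤ #P) :
    ∃ Q ⊆ P, m / 4 ≤ #Q ∧
      (∀ p ∈ Q, m / 4 / #X ≤ #(row P Y p.1) ∧ m / 4 / #Y ≤ #(col P X p.2)) ∧
      ∀ p ∈ Q, m / 4 / #D ≤ #(line Q X (p.2 / p.1)) := by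
  set P₁ := {p ∈ P | m / 4 / #X ≤ #(row P Y p.1)}
  set P₂ := {p ∈ P₁ | m / 4 / #Y ≤ #(col P₁ X p.2)}
  set Q := {p ∈ P₂ | m / 4 / #D ≤ #(line P₂ X (p.2 / p.1))}
  have hP₁ : P₁ ⊆ P := filter_subset _ _
  have hP₂ : P₂ ⊆ P₁ := filter_subset _ _
  have hQ : Q ⊆ P₂ := filter_subset _ _
  have hm4 : 0 ≤ m / 4 := by positivity
  have h₁ : (#P : ℝ) ≤ #P₁ + #X * (m / 4 / #X) :=
    card_le_card_filter_le_add (f := Prod.fst) (fun p hp => (mem_product.1 (hP hp)).1) _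
      (card_fiber_fst_le_card_row hP) (by positivity)
  have h₂ : (#P₁ : ℝ) ≤ #P₂ + #Y * (m / 4 / #Y) :=
    card_le_card_filter_le_add (f := Prod.snd) (fun p hp => (mem_product.1 (hP (hP₁ hp))).2) _
      (card_fiber_snd_le_card_col (hP₁.trans hP)) (by positivity)
  have h₃ : (#P₂ : ℝ) ≤ #Q + #D * (m / 4 / #D) :=
    card_le_card_filter_le_add (f := fun p : F × F => p.2 / p.1)
      (fun p hp => hPD p (hP₁ (hP₂ hp))) (fun ξ => #(line P₂ X ξ))
      (fun ξ => (card_fiber_slope_eq_card_line hX0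
        (fun p hp => (mem_product.1 (hP (hP₁ (hP₂ hp)))).1) ξ).le) (by positivity)
  refine ⟨Q, hQ.trans (hP₂.trans hP₁), ?_, fun p hp => ⟨(mem_filter.1 (hP₂ (hQ hp))).2, ?_⟩,
    fun p hp => ?_⟩
  · linarith [natCast_mul_div_le hm4 #X, natCast_mul_div_le hm4 #Y, natCast_mul_div_le hm4 #D]
  · refine (mem_filter.1 (hQ hp)).2.trans ?_
    exact_mod_cast card_le_card (col_mono hP₁ _)
  · refine (mem_filter.1 hp).2.trans ?_
    gcongr
    intro x hx
    obtain ⟨hxX, hxP⟩ := mem_line.1 hx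
    refine mem_line.2 ⟨hxX, mem_filter.2 ⟨hxP, ?_⟩⟩
    rw [mul_div_cancel_right₀ _ fun h => hX0 (h ▸ hxX)]
    exact (mem_filter.1 hp).2

lemma exists_mul_card_sq_le_pathCount (hX : X.Nonempty) (hY : Y.Nonempty) (hX0 : (0 : F) ∉ X)
    (hQ : Q ⊆ X ×ˢ Y) {m : ℝ} (hm0 : 0 ≤ m) (hm : ∀ p ∈ Q, m ≤ #(line Q X (p.2 / p.1))) :
    ∃ x₀ ∈ X, ∃ y₀ ∈ Y, m * #Q ^ 2 ≤ #X ^ 2 * #Y * pathCount Q X Y x₀ y₀ := by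
  set W := ∑ x ∈ X, ∑ y ∈ Y, (pathCount Q X Y x y : ℝ)
  obtain ⟨p, hp, hW⟩ := exists_le_of_sum_le (hX.product hY) (f := fun _ => W)
    (g := fun p => #X * #Y * (pathCount Q X Y p.1 p.2 : ℝ))
    (by rw [sum_const, card_product, ← mul_sum, sum_product, nsmul_eq_mul]; push_cast; exact le_rfl)
  obtain ⟨hx, hy⟩ := mem_product.1 hp
  refine ⟨p.1, hx, p.2, hy, (mul_card_sq_le_sum_sum_pathCount hX0 hQ hm0 hm).trans ?_⟩
  calc (#X : ℝ) * W ≤ #X * (#X * #Y * pathCount Q X Y p.1 p.2) := by gcongr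
    _ = _ := by ring

lemma exists_subset_row_pathCount_div_le (x₀ y₀ : F) {M : ℝ}
    (hM : ∀ z ∈ row Q Y x₀, (#(line Q X (z / x₀)) : ℝ) ≤ M) :
    ∃ Ytilde ⊆ row Q Y x₀, (pathCount Q X Y x₀ y₀ : ℝ) / (2 * M) ≤ #Ytilde ∧
      ∀ z ∈ Ytilde, (pathCount Q X Y x₀ y₀ : ℝ) / (2 * #Y) ≤
        #(line Q X (z / x₀) ∩ col Q X y₀) := by
  obtain ⟨Ytilde, hYtilde, hcard, hrich⟩ := exists_subset_sum_div_le (row Q Y x₀)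
    (fun z => #(line Q X (z / x₀) ∩ col Q X y₀)) fun z hz =>
      (Nat.cast_le.2 (card_le_card inter_subset_left)).trans (hM z hz)
  refine ⟨Ytilde, hYtilde, by simpa [pathCount] using hcard, fun z hz => ?_⟩
  calc (pathCount Q X Y x₀ y₀ : ℝ) / (2 * #Y) ≤ pathCount Q X Y x₀ y₀ / (2 * #(row Q Y x₀)) := by
        have hrow : 0 < #(row Q Y x₀) := card_pos.2 ⟨z, hYtilde hz⟩
        gcongr
        exact filter_subset _ _
    _ ≤ _ := by simpa [pathCount] using hrich z hz

lemma coe_line (hPX : ∀ p ∈ P, p.1 ∈ X) (ξ : F) :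
    (line P X ξ : Set F) = {x | (x, ξ * x) ∈ (P : Set (F × F))} := by
  ext x
  simp only [coe_filter, line, Set.mem_ofPred_eq, mem_coe, and_iff_right_iff_imp]
  exact fun h => hPX _ h

theorem exists_large_pathCount (hX : X.Nonempty) (hY : Y.Nonempty) (hX0 : (0 : F) ∉ X)
    (hP : P ⊆ X ×ˢ Y) (hPD : ∀ p ∈ P, p.2 / p.1 ∈ D) (hD : D.Nonempty) {N : ℕ}
    (hlow : ∀ ξ ∈ D, N ≤ #(line P X ξ)) :
    ∃ Q ⊆ P, (∀ p ∈ Q,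
        #D * N / 4 / #X ≤ (#(row P Y p.1) : ℝ) ∧ #D * N / 4 / #Y ≤ (#(col P X p.2) : ℝ)) ∧
      ∃ x₀ ∈ X, ∃ y₀ ∈ Y,
        #D ^ 2 * N ^ 3 / (64 * #X ^ 2 * #Y) ≤ (pathCount Q X Y x₀ y₀ : ℝ) := by
  have hPX : ∀ p ∈ P, p.1 ∈ X := fun p hp => (mem_product.1 (hP hp)).1
  have hcardP : #D * N ≤ #P := by
    rw [card_eq_sum_card_line hX0 hPX hPD, ← smul_eq_mul]
    exact card_nsmul_le_sum D _ N hlow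
  obtain ⟨Q, hQP, hQcard, hpopular, hQlines⟩ :=
    exists_popular_subset hX0 hP hPD (m := #D * N) (by positivity) (by exact_mod_cast hcardP)
  have hD0 : (#D : ℝ) ≠ 0 := by exact_mod_cast hD.card_pos.ne'
  have hthreshold : (#D * N / 4 / #D : ℝ) = N / 4 := by field_simp
  obtain ⟨x₀, hx₀, y₀, hy₀, hS⟩ := exists_mul_card_sq_le_pathCount hX hY hX0 (hQP.trans hP)
    (m := N / 4) (by positivity) fun p hp => hthreshold ▸ hQlines p hp
  refine ⟨Q, hQP, hpopular, x₀, hx₀, y₀, hy₀, ?_⟩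
  have hX : (0 : ℝ) < #X := by exact_mod_cast hX.card_pos
  have hY : (0 : ℝ) < #Y := by exact_mod_cast hY.card_pos
  have hQsq : (#D * N / 4 : ℝ) ^ 2 ≤ #Q ^ 2 := by gcongr
  rw [div_le_iff₀ (by positivity)]
  linarith [mul_le_mul_of_nonneg_left hQsq (by positivity : (0 : ℝ) ≤ N / 4)]

theorem exists_popular_row_col_rich_slopes (hX : X.Nonempty) (hY : Y.Nonempty)
    (hX0 : (0 : F) ∉ X) (hP : P ⊆ X ×ˢ Y) (hPD : ∀ p ∈ P, p.2 / p.1 ∈ D) (hD : D.Nonempty)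
    {N : ℕ} (hN : 0 < N) {K : ℝ}
    (hlines : ∀ ξ ∈ D, (N : ℝ) ≤ #(line P X ξ) ∧ (#(line P X ξ) : ℝ) ≤ K * N) :
    ∃ x₀ ∈ X, ∃ y₀ ∈ Y,
      1 / 4 * #D * N / #X ≤ (#(row P Y x₀) : ℝ) ∧ 1 / 4 * #D * N / #Y ≤ (#(col P X y₀) : ℝ) ∧
      ∃ Ytilde ⊆ row P Y x₀, 1 / (128 * K) * #D ^ 2 * N ^ 2 / (#X ^ 2 * #Y) ≤ (#Ytilde : ℝ) ∧
        ∀ z ∈ Ytilde, 1 / 128 * #D ^ 2 * N ^ 3 / (#X ^ 2 * #Y ^ 2) ≤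
          (#(line P X (z / x₀) ∩ col P X y₀) : ℝ) := by
  obtain ⟨Q, hQP, hpopular, x₀, hx₀, y₀, hy₀, hS⟩ := exists_large_pathCount hX hY hX0 hP hPD hD
    fun ξ hξ => by exact_mod_cast (hlines ξ hξ).1
  obtain ⟨z, hz, hzS⟩ : ∃ z ∈ row Q Y x₀, #(line Q X (z / x₀) ∩ col Q X y₀) ≠ 0 := by
    refine exists_ne_zero_of_sum_ne_zero fun hS0 => ?_
    have : (0 : ℝ) < #D ^ 2 * N ^ 3 / (64 * #X ^ 2 * #Y) := by
      have := hD.card_pos; have := hX.card_pos; have := hY.card_pos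
      positivity
    simp only [pathCount, hS0, Nat.cast_zero] at hS
    linarith
  obtain ⟨x, hx⟩ := card_ne_zero.1 hzS
  have hK : 0 < K := by
    obtain ⟨ξ, hξ⟩ := hD
    have hNK := (hlines ξ hξ).1.trans (hlines ξ hξ).2
    have hN : (0 : ℝ) < N := by exact_mod_cast hN
    nlinarith
  obtain ⟨Ytilde, hYt, hcard, hrich⟩ := exists_subset_row_pathCount_div_le x₀ y₀ (M := K * N)
    fun z hz => (Nat.cast_le.2 (card_le_card (line_mono hQP _))).trans
      (hlines _ (hPD _ (hQP (mem_row.1 hz).2))).2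
  have hX := hX.card_pos
  have hY := hY.card_pos
  refine ⟨x₀, hx₀, y₀, hy₀, (le_of_eq (by ring)).trans (hpopular _ (mem_row.1 hz).2).1,
    (le_of_eq (by ring)).trans (hpopular _ (mem_col.1 (mem_inter.1 hx).2).2).2, Ytilde,
    hYt.trans (row_mono hQP x₀), ?_, fun z hz => ?_⟩
  · calc (1 / (128 * K) * #D ^ 2 * N ^ 2 / (#X ^ 2 * #Y) : ℝ)
        = #D ^ 2 * N ^ 3 / (64 * #X ^ 2 * #Y) / (2 * (K * N)) := by field_simp; ring
      _ ≤ (pathCount Q X Y x₀ y₀ : ℝ) / (2 * (K * N)) := by gcongr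
      _ ≤ #Ytilde := hcard
  · calc (1 / 128 * #D ^ 2 * N ^ 3 / (#X ^ 2 * #Y ^ 2) : ℝ)
        = #D ^ 2 * N ^ 3 / (64 * #X ^ 2 * #Y) / (2 * #Y) := by field_simp; ring
      _ ≤ (pathCount Q X Y x₀ y₀ : ℝ) / (2 * #Y) := by gcongr
      _ ≤ #(line Q X (z / x₀) ∩ col Q X y₀) := hrich z hz
      _ ≤ (#(line P X (z / x₀) ∩ col P X y₀) : ℝ) := by
        gcongr
        exacts [line_mono hQP _, col_mono hQP _]

end Lines

end PopularLines

open PopularLines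

/-- **Lemma 2.13.** Suppose `P ⊆ X × Y` is supported on `L` lines through the origin with
slopes in `D`, each such line carrying between `N` and `K·N` points of `P`. Then there are a
popular abscissa `x₀` and ordinate `y₀` with `|Y_{x₀}| ≥ cLN/|X|`, `|X_{y₀}| ≥ cLN/|Y|`, and a
subset `Ytilde ⊆ Y_{x₀}` with `|Ytilde| ≥ cL²N²/(|X|²|Y|)` such that
`|P_{z/x₀} ∩ X_{y₀}| ≥ cL²N³/(|X|²|Y|²)` for every `z ∈ Ytilde`. -/
theorem popular_line_structure :
    ∀ K : ℝ, 1 ≤ K → ∃ c : ℝ, 0 < c ∧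
      ∀ (q : ℕ) (F : Type) [Field F] [Fintype F],
        Fintype.card F = q →
        ∀ X Y : Set F, X.Nonempty → Y.Nonempty → (0 : F) ∉ X →
        ∀ D : Set F, D.Nonempty →
        ∀ L N : ℕ, D.ncard = L → 1 ≤ N →
        ∀ P : Set (F × F), P.Nonempty → P ⊆ X ×ˢ Y →
          (∀ p ∈ P, ∃ ξ ∈ D, p.2 = ξ * p.1) →
          (∀ ξ ∈ D, (N : ℝ) ≤ ({x : F | (x, ξ * x) ∈ P}.ncard : ℝ) ∧
            ({x : F | (x, ξ * x) ∈ P}.ncard : ℝ) ≤ K * (N : ℝ)) →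
          ∃ x₀ ∈ X, ∃ y₀ ∈ Y,
            c * (L : ℝ) * (N : ℝ) / (X.ncard : ℝ) ≤
              (({y ∈ Y | (x₀, y) ∈ P}).ncard : ℝ) ∧
            c * (L : ℝ) * (N : ℝ) / (Y.ncard : ℝ) ≤
              (({x ∈ X | (x, y₀) ∈ P}).ncard : ℝ) ∧
            ∃ Ytilde ⊆ {y ∈ Y | (x₀, y) ∈ P},
              c * (L : ℝ) ^ 2 * (N : ℝ) ^ 2 / ((X.ncard : ℝ) ^ 2 * (Y.ncard : ℝ)) ≤
                (Ytilde.ncard : ℝ) ∧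
              ∀ z ∈ Ytilde,
                c * (L : ℝ) ^ 2 * (N : ℝ) ^ 3 /
                    ((X.ncard : ℝ) ^ 2 * (Y.ncard : ℝ) ^ 2) ≤
                  (({x : F | (x, (z / x₀) * x) ∈ P} ∩ {x ∈ X | (x, y₀) ∈ P}).ncard : ℝ) := by
  intro K hK
  refine ⟨1 / (128 * K), by positivity,
    fun q F _ _ _ X Y hX hY hX0 D hD L N hL hN P _ hPXY hPD hlines => ?_⟩
  classical
  lift X to Finset F using X.toFinite
  lift Y to Finset F using Y.toFinite
  lift D to Finset F using D.toFinite
  lift P to Finset (F × F) using P.toFinite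
  subst hL
  rw [← Finset.coe_product, Finset.coe_subset] at hPXY
  have hPX : ∀ p ∈ P, p.1 ∈ X := fun p hp => (Finset.mem_product.1 (hPXY hp)).1
  have hPD' : ∀ p ∈ P, p.2 / p.1 ∈ D := fun p hp => by
    obtain ⟨ξ, hξ, hp2⟩ := hPD p hp
    rwa [hp2, mul_div_cancel_right₀ _ (ne_of_mem_of_not_mem (hPX p hp) hX0)]
  simp only [← coe_line hPX, Set.ncard_coe_finset] at hlines
  obtain ⟨x₀, hx₀, y₀, hy₀, hrow, hcol, Ytilde, hYt, hcard, hrich⟩ :=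
    exists_popular_row_col_rich_slopes hX hY hX0 hPXY hPD' hD hN hlines
  have hc : 1 / (128 * K) ≤ 1 / 128 := by gcongr; linarith
  simp only [← coe_row, ← coe_col, ← coe_line hPX, ← Finset.coe_inter, Set.ncard_coe_finset]
  refine ⟨x₀, hx₀, y₀, hy₀, le_trans (by gcongr; linarith) hrow,
    le_trans (by gcongr; linarith) hcol, Ytilde, Finset.coe_subset.2 hYt, by simpa using hcard,
    fun z hz => le_trans (by gcongr) (hrich z hz)⟩
end
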